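/- arXiv:1608.00635 — 2 statements merged into one kernel-verified Lean document; each statement's English description precedes it below -/
import Mathlib

section
/- Let n, v be positive integers, let A be a real n×n Hurwitz matrix (every eigenvalue of A, viewed as a complex matrix, has strictly negative real part), and let B be a real n×v matrix. Then the matrix-valued function t ↦ exp(tA) · B · Bᵀ · exp(tAᵀ) is integrable on [0, ∞) (entrywise), so that the controllability gramian W = ∫₀^∞ exp(tA) B Bᵀ exp(tAᵀ) dt is a well-defined real n×n matrix. -/
/-! The eigenvalues of `exp M` are the exponentials of eigenvalues of `M`, because the commuting
matrices `M` and `exp M` share an eigenvector. Hence for a Hurwitz matrix `M` the spectral radius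
of `exp M` is `< 1`, and Gelfand's formula gives `‖exp (k • M)‖ < 1` for some `k ≥ 1`. Writing
`t = m k + s` with `0 ≤ s < k` turns this into `‖exp (t • M)‖ = O(e^{-εt})`, so the gramian
integrand is `O(e^{-2εt})`. -/

open MeasureTheory NormedSpace Matrix
open Filter Asymptotics Set

theorem Module.End.HasEigenvalue.exists_hasEigenvector_of_commute {K V : Type*} [Field K]
    [IsAlgClosed K] [AddCommGroup V] [Module K V] [FiniteDimensional K V]
    {f g : Module.End K V} {μ : K} (hμ : g.HasEigenvalue μ) (hfg : Commute f g) :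
    ∃ c v, f.HasEigenvector c v ∧ g v = μ • v := by
  have hf : ∀ x ∈ g.eigenspace μ, f x ∈ g.eigenspace μ :=
    fun x hx => mapsTo_genEigenspace_of_comm hfg.symm μ 1 hx
  have : Nontrivial (g.eigenspace μ) := Submodule.nontrivial_iff_ne_bot.2 hμ
  obtain ⟨c, hc⟩ := Module.End.exists_eigenvalue (f.restrict hf)
  obtain ⟨⟨v, hvμ⟩, hv⟩ := hc.exists_hasEigenvector
  refine ⟨c, v, ⟨eigenspace_restrict_le_eigenspace f hf c ⟨_, hv.1, rfl⟩, ?_⟩,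
    mem_eigenspace_iff.1 hvμ⟩
  exact fun h => hv.2 (Subtype.ext h)

theorem spectrum.exists_pow_norm_lt_one {A : Type*} [NormedRing A] [NormedAlgebra ℂ A]
    [CompleteSpace A] {a : A} (ha : ∀ z ∈ spectrum ℂ a, ‖z‖ < 1) :
    ∃ k : ℕ, 0 < k ∧ ‖a ^ k‖ < 1 := by
  rcases subsingleton_or_nontrivial A with hA | hA
  · exact ⟨1, one_pos, by simp [Subsingleton.elim (a ^ 1) 0]⟩
  have hρ : spectralRadius ℂ a < (1 : NNReal) :=
    spectrum.spectralRadius_lt_of_forall_lt a fun z hz => by exact_mod_cast ha z hz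
  obtain ⟨k, hk, hlt⟩ := ((eventually_ge_atTop 1).and
    ((spectrum.pow_nnnorm_pow_one_div_tendsto_nhds_spectralRadius a).eventually_lt_const
      hρ)).exists
  refine ⟨k, hk, ?_⟩
  have : (‖a ^ k‖₊ : ENNReal) < 1 := by
    by_contra! h
    exact (ENNReal.one_le_rpow h (by positivity)).not_gt hlt
  exact_mod_cast this

section Semigroup

variable {R : Type*} [NormedRing R] {T : ℝ → R}

theorem apply_nat_mul_add_of_map_add (hT : ∀ s t, T (s + t) = T s * T t) (τ s : ℝ) (m : ℕ) :
    T (m * τ + s) = T τ ^ m * T s := by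
  induction m with
  | zero => simp
  | succ m ih =>
    rw [Nat.cast_succ, add_one_mul, add_comm _ τ, add_assoc, hT, ih, pow_succ', mul_assoc]

theorem exists_isBigO_exp_neg_of_norm_lt_one (hcont : Continuous T)
    (hT : ∀ s t, T (s + t) = T s * T t) {τ : ℝ} (hτ : 0 < τ) (hτ1 : ‖T τ‖ < 1) :
    ∃ ε > 0, T =O[atTop] fun t => Real.exp (-ε * t) := by
  -- `r > 0` even when `T τ = 0`, so that `log r` is meaningful
  obtain ⟨r, hTr, hr1⟩ := exists_between hτ1
  have hr0 : 0 < r := (norm_nonneg _).trans_lt hTr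
  obtain ⟨C, hC⟩ := isCompact_Icc.exists_bound_of_continuousOn (hcont.continuousOn (s := Icc 0 τ))
  have hC0 : 0 ≤ C := (norm_nonneg _).trans (hC 0 ⟨le_rfl, hτ.le⟩)
  set ε := -Real.log r / τ
  have hε : 0 < ε := div_pos (neg_pos.2 (Real.log_neg hr0 hr1)) hτ
  have hετ : Real.exp (-ε * τ) = r := by
    rw [neg_mul, div_mul_cancel₀ _ hτ.ne', neg_neg, Real.exp_log hr0]
  refine ⟨ε, hε, IsBigO.of_bound (C * Real.exp (ε * τ)) ?_⟩
  filter_upwards [eventually_ge_atTop τ] with t ht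
  set m := ⌊t / τ⌋₊
  have hm : 1 ≤ m := Nat.le_floor (by rwa [Nat.cast_one, one_le_div hτ])
  have hmt : m * τ ≤ t := (le_div_iff₀ hτ).1 (Nat.floor_le (div_nonneg (hτ.le.trans ht) hτ.le))
  have htm : t < m * τ + τ := by
    rw [← add_one_mul]
    exact (div_lt_iff₀ hτ).1 (Nat.lt_floor_add_one _)
  have hsplit : T t = T τ ^ m * T (t - m * τ) := by
    rw [← apply_nat_mul_add_of_map_add hT, add_sub_cancel]
  calc ‖T t‖ ≤ ‖T τ‖ ^ m * C := by
        rw [hsplit]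
        exact (norm_mul_le _ _).trans (mul_le_mul (norm_pow_le' _ hm)
          (hC _ ⟨by linarith, by linarith⟩) (norm_nonneg _) (by positivity))
    _ ≤ r ^ m * C := by gcongr
    _ = C * Real.exp (-ε * (m * τ)) := by
        rw [← hετ, ← Real.exp_nat_mul]
        ring_nf
    _ ≤ C * Real.exp (-ε * (t - τ)) := by
        gcongr C * Real.exp ?_
        nlinarith
    _ = C * Real.exp (ε * τ) * ‖Real.exp (-ε * t)‖ := by
        rw [Real.norm_eq_abs, abs_of_pos (Real.exp_pos _), mul_assoc, ← Real.exp_add]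
        ring_nf

end Semigroup

section LinftyOp

attribute [local instance] Matrix.linftyOpNormedRing Matrix.linftyOpNormedAlgebra

variable {ι : Type*} [Fintype ι] [DecidableEq ι]

theorem Matrix.exp_mulVec_of_mulVec_eq_smul {𝕂 : Type*} [RCLike 𝕂] {M : Matrix ι ι 𝕂} {c : 𝕂}
    {x : ι → 𝕂} (h : M *ᵥ x = c • x) : exp M *ᵥ x = exp c • x := by
  have hpow (k : ℕ) : (M ^ k) *ᵥ x = c ^ k • x := by
    induction k with
    | zero => simp
    | succ k ih => rw [pow_succ', ← mulVec_mulVec, ih, mulVec_smul, h, smul_smul, ← pow_succ]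
  let L : Matrix ι ι 𝕂 →L[𝕂] ι → 𝕂 :=
    (LinearMap.applyₗ x ∘ₗ Matrix.toLin'.toLinearMap).toContinuousLinearMap
  have hM := (exp_series_hasSum_exp' (𝕂 := 𝕂) M).mapL L
  have hc := (exp_series_hasSum_exp' (𝕂 := 𝕂) c).smul_const x
  simp only [L, LinearMap.coe_toContinuousLinearMap', LinearMap.coe_comp, Function.comp_apply,
    LinearEquiv.coe_coe, toLin'_apply, LinearMap.applyₗ_apply_apply, smul_mulVec, hpow,
    smul_smul] at hM
  simp only [smul_eq_mul] at hc
  exact hM.unique hc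

theorem Matrix.spectrum_exp_subset (M : Matrix ι ι ℂ) :
    spectrum ℂ (exp M) ⊆ Complex.exp '' spectrum ℂ M := by
  intro μ hμ
  rw [← spectrum_toLin', ← Module.End.hasEigenvalue_iff_mem_spectrum] at hμ
  obtain ⟨c, v, hv, hμv⟩ := hμ.exists_hasEigenvector_of_commute
    (((Commute.refl M).exp_right).map Matrix.toLinAlgEquiv')
  refine ⟨c, spectrum_toLin' M ▸ (Module.End.hasEigenvalue_of_hasEigenvector hv).mem_spectrum, ?_⟩
  have hexp : exp M *ᵥ v = Complex.exp c • v := by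
    rw [Complex.exp_eq_exp_ℂ]
    exact exp_mulVec_of_mulVec_eq_smul (Module.End.HasEigenvector.apply_eq_smul hv)
  exact smul_left_injective ℂ hv.2 (hexp.symm.trans hμv)

theorem Matrix.exists_isBigO_exp_smul_of_re_neg {M : Matrix ι ι ℂ}
    (hM : ∀ μ ∈ spectrum ℂ M, μ.re < 0) :
    ∃ ε > 0, (fun t : ℝ => exp (t • M)) =O[atTop] fun t => Real.exp (-ε * t) := by
  obtain ⟨k, hk, hk1⟩ := spectrum.exists_pow_norm_lt_one (a := exp M) fun z hz => by
    obtain ⟨l, hl, rfl⟩ := spectrum_exp_subset M hz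
    simpa [Complex.norm_exp] using hM l hl
  refine exists_isBigO_exp_neg_of_norm_lt_one (by fun_prop) (fun s t => ?_)
    (Nat.cast_pos.2 hk) ?_
  · exact add_smul s t M ▸ exp_add_of_commute _ _ (((Commute.refl M).smul_left s).smul_right t)
  · rwa [Nat.cast_smul_eq_nsmul, exp_nsmul]

theorem Matrix.exp_smul_map_ofReal (A : Matrix ι ι ℝ) (t : ℝ) :
    (exp (t • A)).map Complex.ofReal = exp (t • A.map Complex.ofReal) := by
  have h := map_exp (Complex.ofRealAm.mapMatrix (m := ι))
    (continuous_id.matrix_map Complex.continuous_ofReal) (t • A)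
  rwa [_root_.map_smul, AlgHom.mapMatrix_apply, AlgHom.mapMatrix_apply, Complex.ofRealAm_coe] at h

theorem Matrix.exists_isBigO_exp_smul_of_re_neg_map_ofReal {A : Matrix ι ι ℝ}
    (hA : ∀ μ ∈ spectrum ℂ (A.map (Complex.ofReal ·)), μ.re < 0) :
    ∃ ε > 0, (fun t : ℝ => exp (t • A)) =O[atTop] fun t => Real.exp (-ε * t) := by
  obtain ⟨ε, hε, hM⟩ := exists_isBigO_exp_smul_of_re_neg hA
  let re : Matrix ι ι ℂ →L[ℝ] Matrix ι ι ℝ := Complex.reLm.mapMatrix.toContinuousLinearMap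
  have hexp (t : ℝ) : exp (t • A) = re (exp (t • A.map (Complex.ofReal ·))) := by
    have hre : re ((exp (t • A)).map Complex.ofReal) = exp (t • A) := by ext; simp [re]
    exact hre.symm.trans (congrArg re (exp_smul_map_ofReal A t))
  exact ⟨ε, hε, (funext hexp ▸ re.isBigO_comp _ _).trans hM⟩

theorem gramian_integrable_general
    (n v : ℕ)
    (A : Matrix (Fin n) (Fin n) ℝ)
    (hA : ∀ μ ∈ spectrum ℂ (A.map (Complex.ofReal ·)), μ.re < 0)
    (B : Matrix (Fin n) (Fin v) ℝ) :
    ∀ i j : Fin n,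
      IntegrableOn
        (fun t : ℝ => (exp (t • A) * B * Bᵀ * exp (t • Aᵀ)) i j)
        (Set.Ici (0 : ℝ)) := by
  intro i j
  obtain ⟨ε, hε, hexp⟩ := exists_isBigO_exp_smul_of_re_neg_map_ofReal hA
  have hexpT : (fun t : ℝ => exp (t • Aᵀ)) =O[atTop] fun t => Real.exp (-ε * t) := by
    simp only [← transpose_smul, exp_transpose]
    exact ((transposeLinearEquiv (Fin n) (Fin n) ℝ ℝ).toLinearMap.toContinuousLinearMap.isBigO_comp
      _ _).trans hexp
  have hgram : (fun t : ℝ => exp (t • A) * B * Bᵀ * exp (t • Aᵀ)) =O[atTop]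
      fun t => Real.exp (-(2 * ε) * t) := by
    simp only [Matrix.mul_assoc (exp _) B]
    refine ((hexp.mul (isBigO_const_const (B * Bᵀ) one_ne_zero atTop)).mul hexpT).congr_right
      fun t => ?_
    rw [mul_one, ← Real.exp_add]
    ring_nf
  have hentry := ((entryLinearMap ℝ ℝ i j).toContinuousLinearMap.isBigO_comp _ _).trans hgram
  rw [integrableOn_Ici_iff_integrableOn_Ioi]
  exact integrable_of_isBigO_exp_neg (by positivity) (Continuous.continuousOn (by fun_prop)) hentry

/-- If `A` is a real `n × n` Hurwitz matrix (every eigenvalue of `A`,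
viewed as a complex matrix, has strictly negative real part) and `B` is a real `n × v`
matrix, then `t ↦ exp (t A) * B * Bᵀ * exp (t Aᵀ)` is (entrywise) integrable on `[0, ∞)`,
so the controllability gramian `W = ∫₀^∞ exp (t A) B Bᵀ exp (t Aᵀ) dt` is well defined. -/
theorem gramian_integrable
    (n v : ℕ) (hn : 0 < n) (hv : 0 < v)
    (A : Matrix (Fin n) (Fin n) ℝ)
    (hA : ∀ μ ∈ spectrum ℂ (A.map (Complex.ofReal ·)), μ.re < 0)
    (B : Matrix (Fin n) (Fin v) ℝ) :
    ∀ i j : Fin n,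
      IntegrableOn
        (fun t : ℝ => (exp (t • A) * B * Bᵀ * exp (t • Aᵀ)) i j)
        (Set.Ici (0 : ℝ)) :=
  gramian_integrable_general n v A hA B

end LinftyOp
end

section
/- Let n, v, r, s be positive integers, let A be a real n×n Hurwitz matrix (every eigenvalue of A, viewed as a complex matrix, has strictly negative real part), and let B be a real n×v matrix. Let T₁, …, T_r be real v×v orthogonal matrices (T_lᵀT_l = I_v), let c₁, …, c_s be positive reals, and let e₁, …, e_v be the standard unit vectors of ℝ^v. For each i ∈ {1,…,v}, l ∈ {1,…,r}, m ∈ {1,…,s}, define the trajectory x^{ilm}(t) = c_m · exp(tA) · B · T_l · e_i (the impulse response of the system ẋ = Ax + Bu started at the zero steady state x₀ = 0 under the input u(t) = c_m T_l e_i δ(t)). Then the empirical controllability covariance W = Σᵢ₌₁^v Σₗ₌₁^r Σₘ₌₁^s (1/(r·s·c_m²)) ∫₀^∞ x^{ilm}(t) · x^{ilm}(t)ᵀ dt equals the controllability gramian ∫₀^∞ exp(tA) B Bᵀ exp(tAᵀ) dt. -/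
/-!
Since `Tₗ Tₗᵀ = 1`, summing the outer products of the columns of `exp (t A) B Tₗ` over `i`
gives `exp (t A) B Bᵀ exp (t Aᵀ)` for every `l`, and the weights `1 / (r s c_m²)` exactly undo
the excitation sizes and the averaging over `l` and `m`. The only analytic point is exchanging
the sum over `i` with the integral, which needs integrability: if `A` is Hurwitz, every
eigenvalue of `exp A` is `exp λ` with `Re λ < 0`, so the spectral radius of `exp A` is `< 1`,
Gelfand's formula gives `‖exp (k A)‖ < 1` for some `k ≥ 1`, and the semigroup property turns
this into an exponential bound `‖exp (t A)‖ ≤ C e^{-ε t}`.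
-/

open MeasureTheory NormedSpace Matrix
open scoped Matrix.Norms.Frobenius

theorem exists_pos_norm_pow_lt_one_of_forall_norm_lt_one {𝔸 : Type*} [NormedRing 𝔸]
    [NormedAlgebra ℂ 𝔸] [CompleteSpace 𝔸] {a : 𝔸} (ha : ∀ μ ∈ spectrum ℂ a, ‖μ‖ < 1) :
    ∃ k : ℕ, 0 < k ∧ ‖a ^ k‖ < 1 := by
  have hρ : spectralRadius ℂ a < 1 := by
    rcases (spectrum ℂ a).eq_empty_or_nonempty with hempty | hne
    · simp [spectralRadius, hempty]
    · exact_mod_cast spectrum.spectralRadius_lt_of_forall_lt_of_nonempty hne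
        fun μ hμ => by exact_mod_cast ha μ hμ
  obtain ⟨k, hk, hkpos⟩ := ((spectrum.pow_norm_pow_one_div_tendsto_nhds_spectralRadius a
    |>.eventually_lt_const hρ).and (Filter.eventually_gt_atTop 0)).exists
  refine ⟨k, hkpos, not_le.mp fun h => hk.not_ge ?_⟩
  exact ENNReal.one_le_ofReal.mpr (Real.one_le_rpow h (by positivity))

section Semigroup

variable {𝔸 : Type*} [NormedRing 𝔸] [NormedAlgebra ℝ 𝔸] [NormedAlgebra ℚ 𝔸] [CompleteSpace 𝔸]

theorem norm_exp_add_nat_mul_smul_le (a : 𝔸) (u τ : ℝ) (j : ℕ) :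
    ‖exp ((u + j * τ) • a)‖ ≤ ‖exp (u • a)‖ * ‖exp (τ • a)‖ ^ j := by
  induction j with
  | zero => simp
  | succ j ih =>
    have hsplit : (u + ↑(j + 1) * τ) • a = (u + j * τ) • a + τ • a := by
      rw [← add_smul, Nat.cast_succ, add_one_mul, add_assoc]
    rw [hsplit, NormedSpace.exp_add_of_commute (((Commute.refl a).smul_left _).smul_right _),
      pow_succ, ← mul_assoc]
    exact (norm_mul_le _ _).trans (by gcongr)

theorem exists_norm_exp_smul_le_of_norm_exp_lt_one {a : 𝔸} {τ : ℝ} (hτ : 0 < τ)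
    (ha : ‖exp (τ • a)‖ < 1) :
    ∃ C ε : ℝ, 0 < ε ∧ ∀ t, 0 ≤ t → ‖exp (t • a)‖ ≤ C * Real.exp (-ε * t) := by
  obtain ⟨C, hC⟩ := (isCompact_Icc (a := 0) (b := τ)).exists_bound_of_continuousOn
    (f := fun t : ℝ => exp (t • a))
    (exp_continuous.comp (continuous_id.smul continuous_const)).continuousOn
  -- bounded away from `0`, so that `Real.log ρ < 0` is a genuine decay rate
  set ρ := max ‖exp (τ • a)‖ (1 / 2)
  have hρ0 : 0 < ρ := lt_max_of_lt_right (by norm_num)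
  have hρ1 : ρ < 1 := max_lt ha (by norm_num)
  refine ⟨C / ρ, -Real.log ρ / τ, div_pos (neg_pos.mpr (Real.log_neg hρ0 hρ1)) hτ,
    fun t ht => ?_⟩
  set j := ⌊t / τ⌋₊
  have hjt : j * τ ≤ t := (le_div_iff₀ hτ).mp (Nat.floor_le (by positivity))
  have htj : t < j * τ + τ := by
    rw [← add_one_mul, ← div_lt_iff₀ hτ]
    exact Nat.lt_floor_add_one _
  have hC0 : 0 ≤ C := (norm_nonneg _).trans (hC 0 ⟨le_rfl, hτ.le⟩)
  calc ‖exp (t • a)‖ = ‖exp ((t - j * τ + j * τ) • a)‖ := by rw [sub_add_cancel]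
    _ ≤ ‖exp ((t - j * τ) • a)‖ * ‖exp (τ • a)‖ ^ j := norm_exp_add_nat_mul_smul_le a _ τ j
    _ ≤ C * ρ ^ (j : ℝ) := by
      rw [Real.rpow_natCast]
      gcongr
      · exact hC _ ⟨by linarith, by linarith⟩
      · exact le_max_left _ _
    _ ≤ C * ρ ^ (t / τ - 1) := by
      refine mul_le_mul_of_nonneg_left (Real.rpow_le_rpow_of_exponent_ge hρ0 hρ1.le ?_) hC0
      rw [sub_le_iff_le_add, div_le_iff₀ hτ, add_one_mul]
      exact htj.le
    _ = C / ρ * Real.exp (-(-Real.log ρ / τ) * t) := by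
      rw [Real.rpow_sub hρ0, Real.rpow_one, Real.rpow_def_of_pos hρ0]
      field_simp

end Semigroup

namespace Matrix

theorem norm_entry_le_frobenius_norm {m n α : Type*} [Fintype m] [Fintype n]
    [SeminormedAddCommGroup α] (X : Matrix m n α) (i : m) (j : n) : ‖X i j‖ ≤ ‖X‖ :=
  (PiLp.norm_apply_le _ j).trans
    (PiLp.norm_apply_le (WithLp.toLp 2 fun i => WithLp.toLp 2 (X i)) i)

theorem mul_mul_transpose_eq_of_transpose_mul_self_eq_one {m n R : Type*} [Fintype n]
    [DecidableEq n] [CommSemiring R] (X : Matrix m n R) {T : Matrix n n R} (hT : Tᵀ * T = 1) :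
    X * T * (X * T)ᵀ = X * Xᵀ := by
  rw [transpose_mul, Matrix.mul_assoc, ← Matrix.mul_assoc T, mul_eq_one_comm.mp hT,
    Matrix.one_mul]

variable {ι : Type*} [Fintype ι] [DecidableEq ι]

theorem exp_mulVec_of_mulVec_eq_smul_s3 {𝕂 : Type*} [RCLike 𝕂] {M : Matrix ι ι 𝕂} {w : ι → 𝕂}
    {μ : 𝕂} (hw : M *ᵥ w = μ • w) : exp M *ᵥ w = exp μ • w := by
  have hpow : ∀ k : ℕ, M ^ k *ᵥ w = μ ^ k • w := by
    intro k
    induction k with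
    | zero => simp
    | succ k ih => rw [pow_succ, ← mulVec_mulVec, hw, mulVec_smul, ih, smul_smul, pow_succ']
  have hM := (exp_series_hasSum_exp' (𝕂 := 𝕂) M).map (mulVec.addMonoidHomLeft w)
    (continuous_id.matrix_mulVec continuous_const)
  refine hM.unique ?_
  convert (exp_series_hasSum_exp' (𝕂 := 𝕂) μ).smul_const w using 2 with k
  simp [mulVec.addMonoidHomLeft, smul_mulVec, hpow, smul_smul]

/-- An eigenspace of `exp M` is `M`-invariant, so it contains an eigenvector of `M`. -/
theorem spectrum_exp_subset_s3 (M : Matrix ι ι ℂ) :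
    spectrum ℂ (exp M) ⊆ Complex.exp '' spectrum ℂ M := by
  intro μ hμ
  set f : Module.End ℂ (ι → ℂ) := toLinAlgEquiv' M
  set g : Module.End ℂ (ι → ℂ) := toLinAlgEquiv' (exp M)
  have hg : g.HasEigenvalue μ := by
    rwa [Module.End.hasEigenvalue_iff_mem_spectrum, AlgEquiv.spectrum_eq]
  have hinv := Module.End.mapsTo_genEigenspace_of_comm
    ((Commute.refl M).exp_left.map toLinAlgEquiv') μ 1
  have : Nontrivial (g.eigenspace μ) := Submodule.nontrivial_iff_ne_bot.mpr hg
  obtain ⟨ν, hν⟩ := Module.End.exists_eigenvalue (f.restrict hinv)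
  obtain ⟨⟨w, hwg⟩, hwf, hw0⟩ := hν.exists_hasEigenvector
  have hw : w ≠ 0 := fun h => hw0 (Subtype.ext h)
  have hMw : M *ᵥ w = ν • w := congrArg Subtype.val (Module.End.mem_eigenspace_iff.mp hwf)
  have hexpw : exp M *ᵥ w = μ • w := Module.End.mem_eigenspace_iff.mp hwg
  refine ⟨ν, ?_, ?_⟩
  · rw [← AlgEquiv.spectrum_eq toLinAlgEquiv' M, ← Module.End.hasEigenvalue_iff_mem_spectrum]
    exact Module.End.hasEigenvalue_of_hasEigenvector ⟨Module.End.mem_eigenspace_iff.mpr hMw, hw⟩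
  · rw [exp_mulVec_of_mulVec_eq_smul_s3 hMw, ← Complex.exp_eq_exp_ℂ] at hexpw
    exact smul_left_injective ℂ hw hexpw

theorem exists_norm_exp_smul_le_of_forall_re_neg {A : Matrix ι ι ℝ}
    (hA : ∀ μ ∈ spectrum ℂ (A.map (Complex.ofReal ·)), μ.re < 0) :
    ∃ C ε : ℝ, 0 < ε ∧ ∀ t, 0 ≤ t → ‖exp (t • A)‖ ≤ C * Real.exp (-ε * t) := by
  set M := A.map (Complex.ofReal ·)
  obtain ⟨k, hk, hlt⟩ := exists_pos_norm_pow_lt_one_of_forall_norm_lt_one (a := exp M)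
    fun μ hμ => by
      obtain ⟨ν, hν, rfl⟩ := spectrum_exp_subset_s3 M hμ
      rw [Complex.norm_exp]
      exact Real.exp_lt_one_iff.mpr (hA ν hν)
  refine exists_norm_exp_smul_le_of_norm_exp_lt_one (τ := k) (Nat.cast_pos.mpr hk) ?_
  have hmap : (exp ((k : ℝ) • A)).map Complex.ofReal = exp M ^ k := by
    rw [← Matrix.exp_nsmul]
    refine (map_exp (Complex.ofRealHom.mapMatrix : Matrix ι ι ℝ →+* Matrix ι ι ℂ)
      (continuous_id.matrix_map Complex.continuous_ofReal) _).trans ?_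
    congr 1
    ext
    simp [M, nsmul_eq_mul]
  calc ‖exp ((k : ℝ) • A)‖ = ‖exp M ^ k‖ := by
        rw [← frobenius_norm_map_eq _ _ Complex.norm_real]
        exact congrArg norm hmap
    _ < 1 := hlt

theorem integrableOn_Ici_apply_mul_apply_of_norm_le_exp {m n : Type*} [Fintype m] [Fintype n]
    {F : ℝ → Matrix m n ℝ} (hF : Continuous F) {C ε : ℝ} (hε : 0 < ε)
    (hFle : ∀ t, 0 ≤ t → ‖F t‖ ≤ C * Real.exp (-ε * t)) (p q : m) (i j : n) :
    IntegrableOn (fun t => F t p i * F t q j) (Set.Ici 0) := by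
  have hdom : IntegrableOn (fun t => C ^ 2 * Real.exp (-(2 * ε) * t)) (Set.Ici 0) :=
    ((integrableOn_Ici_iff_integrableOn_Ioi).mpr
      (exp_neg_integrableOn_Ioi 0 (by positivity))).const_mul _
  refine hdom.mono' ((hF.matrix_elem p i).mul (hF.matrix_elem q j)).aestronglyMeasurable.restrict ?_
  refine (ae_restrict_iff' measurableSet_Ici).mpr (ae_of_all _ fun t ht => ?_)
  have hentry : ∀ a b, ‖F t a b‖ ≤ C * Real.exp (-ε * t) :=
    fun a b => (norm_entry_le_frobenius_norm _ a b).trans (hFle t ht)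
  calc ‖F t p i * F t q j‖ ≤ (C * Real.exp (-ε * t)) * (C * Real.exp (-ε * t)) := by
        rw [norm_mul]
        exact mul_le_mul (hentry p i) (hentry q j) (norm_nonneg _)
          ((norm_nonneg _).trans (hentry p i))
    _ = C ^ 2 * Real.exp (-(2 * ε) * t) := by
        rw [mul_mul_mul_comm, ← Real.exp_add]; ring_nf

theorem integral_exp_mul_mul_transpose_mul_exp_apply_eq_sum {κ : Type*} [Fintype κ]
    {A : Matrix ι ι ℝ}
    (hA : ∀ μ ∈ spectrum ℂ (A.map (Complex.ofReal ·)), μ.re < 0) (D : Matrix ι κ ℝ) (p q : ι) :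
    ∫ t in Set.Ici (0 : ℝ), (exp (t • A) * D * Dᵀ * exp (t • Aᵀ)) p q
      = ∑ i, ∫ t in Set.Ici (0 : ℝ), (exp (t • A) * D) p i * (exp (t • A) * D) q i := by
  obtain ⟨C, ε, hε, hC⟩ := exists_norm_exp_smul_le_of_forall_re_neg hA
  have hF : Continuous fun t : ℝ => exp (t • A) * D :=
    (exp_continuous.comp (continuous_id.smul continuous_const)).matrix_mul continuous_const
  have hFle : ∀ t, 0 ≤ t → ‖exp (t • A) * D‖ ≤ C * ‖D‖ * Real.exp (-ε * t) := fun t ht =>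
    (frobenius_norm_mul _ _).trans <| by
      rw [mul_right_comm]
      exact mul_le_mul_of_nonneg_right (hC t ht) (norm_nonneg D)
  rw [← integral_finsetSum _
    fun i _ => integrableOn_Ici_apply_mul_apply_of_norm_le_exp hF hε hFle p q i i]
  congr 1 with t
  rw [← transpose_smul, exp_transpose, Matrix.mul_assoc (exp (t • A) * D), ← transpose_mul,
    mul_apply]
  simp only [transpose_apply]

end Matrix

theorem ecc_eq_gramian_general
    (n v r s : ℕ) (hr : 0 < r) (hs : 0 < s)
    (A : Matrix (Fin n) (Fin n) ℝ)
    (hA : ∀ μ ∈ spectrum ℂ (A.map (Complex.ofReal ·)), μ.re < 0)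
    (B : Matrix (Fin n) (Fin v) ℝ)
    (T : Fin r → Matrix (Fin v) (Fin v) ℝ)
    (hT : ∀ l, (T l)ᵀ * T l = 1)
    (c : Fin s → ℝ) (hc : ∀ m, 0 < c m)
    -- the impulse-response trajectories, with rest point `x₀ = 0`
    (x : Fin v → Fin r → Fin s → ℝ → (Fin n → ℝ))
    (hx : ∀ (i : Fin v) (l : Fin r) (m : Fin s) (t : ℝ),
      x i l m t = c m • ((NormedSpace.exp (t • A) * B * T l) *ᵥ Pi.single i 1)) :
    ∀ p q : Fin n,
      (∑ i : Fin v, ∑ l : Fin r, ∑ m : Fin s,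
          (1 / ((r : ℝ) * (s : ℝ) * (c m) ^ 2)) *
            ∫ t in Set.Ici (0 : ℝ), vecMulVec (x i l m t) (x i l m t) p q)
        = ∫ t in Set.Ici (0 : ℝ), (NormedSpace.exp (t • A) * B * Bᵀ * NormedSpace.exp (t • Aᵀ)) p q := by
  intro p q
  set I := ∫ t in Set.Ici (0 : ℝ), (exp (t • A) * B * Bᵀ * exp (t • Aᵀ)) p q
  set G : Fin r → Fin v → ℝ := fun l i =>
    ∫ t in Set.Ici (0 : ℝ), (exp (t • A) * (B * T l)) p i * (exp (t • A) * (B * T l)) q i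
  have hterm : ∀ i l m, (1 / ((r : ℝ) * s * c m ^ 2)) *
      ∫ t in Set.Ici (0 : ℝ), vecMulVec (x i l m t) (x i l m t) p q = 1 / (r * s) * G l i := by
    intro i l m
    simp_rw [hx, vecMulVec_apply, Matrix.mul_assoc _ B, mulVec_single_one, Pi.smul_apply,
      col_apply, smul_eq_mul, mul_mul_mul_comm (c m), integral_const_mul, G]
    field_simp [(hc m).ne']
  have hG : ∀ l, ∑ i, G l i = I := fun l => by
    rw [← integral_exp_mul_mul_transpose_mul_exp_apply_eq_sum hA]
    simp_rw [Matrix.mul_assoc (exp _) (B * T l),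
      mul_mul_transpose_eq_of_transpose_mul_self_eq_one B (hT l), ← Matrix.mul_assoc]
    rfl
  simp_rw [hterm, Finset.sum_const, Finset.card_univ, Fintype.card_fin, nsmul_eq_mul]
  rw [Finset.sum_comm]
  simp_rw [← Finset.mul_sum, hG, Finset.sum_const, Finset.card_univ, Fintype.card_fin,
    nsmul_eq_mul]
  field_simp

/-- For a stable linear system `ẋ = A x + B u` (with `A` Hurwitz), the
empirical controllability covariance computed from the impulse-response trajectories
`x^{ilm}(t) = c_m · exp (t A) · B · T_l · e_i` (orthogonal excitation directions `T_l`,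
excitation sizes `c_m > 0`, standard unit vectors `e_i`) equals the controllability
gramian `∫₀^∞ exp (t A) B Bᵀ exp (t Aᵀ) dt` (entrywise). -/
theorem ecc_eq_gramian
    (n v r s : ℕ) (hn : 0 < n) (hv : 0 < v) (hr : 0 < r) (hs : 0 < s)
    (A : Matrix (Fin n) (Fin n) ℝ)
    (hA : ∀ μ ∈ spectrum ℂ (A.map (Complex.ofReal ·)), μ.re < 0)
    (B : Matrix (Fin n) (Fin v) ℝ)
    (T : Fin r → Matrix (Fin v) (Fin v) ℝ)
    (hT : ∀ l, (T l)ᵀ * T l = 1)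
    (c : Fin s → ℝ) (hc : ∀ m, 0 < c m)
    -- the impulse-response trajectories, with rest point `x₀ = 0`
    (x : Fin v → Fin r → Fin s → ℝ → (Fin n → ℝ))
    (hx : ∀ (i : Fin v) (l : Fin r) (m : Fin s) (t : ℝ),
      x i l m t = c m • ((NormedSpace.exp (t • A) * B * T l) *ᵥ Pi.single i 1)) :
    ∀ p q : Fin n,
      (∑ i : Fin v, ∑ l : Fin r, ∑ m : Fin s,
          (1 / ((r : ℝ) * (s : ℝ) * (c m) ^ 2)) *
            ∫ t in Set.Ici (0 : ℝ), vecMulVec (x i l m t) (x i l m t) p q)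
        = ∫ t in Set.Ici (0 : ℝ), (NormedSpace.exp (t • A) * B * Bᵀ * NormedSpace.exp (t • Aᵀ)) p q :=
  ecc_eq_gramian_general n v r s hr hs A hA B T hT c hc x hx
end
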